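/- The extension f : [0,1]² → [0,1] of Cantor's interleaving map is injective. -/

import Mathlib

open Set

/-- The `k`-th digit of the proper decimal expansion of `x`
(meaningful for `x ∈ [0,1)` and `k ≥ 1`): `d_k(x) = ⌊10^k x⌋ - 10⌊10^{k-1} x⌋`. -/
noncomputable def digit (k : ℕ) (x : ℝ) : ℤ :=
  ⌊(10 : ℝ) ^ k * x⌋ - 10 * ⌊(10 : ℝ) ^ (k - 1) * x⌋

/-- Cantor's interleaving map
`C(x,y) = ∑_{k≥1} d_k(x)/10^{2k-1} + ∑_{k≥1} d_k(y)/10^{2k}`. -/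
noncomputable def cantorC (x y : ℝ) : ℝ :=
  (∑' k : ℕ, (digit (k + 1) x : ℝ) / 10 ^ (2 * (k + 1) - 1)) +
    ∑' k : ℕ, (digit (k + 1) y : ℝ) / 10 ^ (2 * (k + 1))

/-- The extension `f : [0,1]² → [0,1]` of Cantor's interleaving map:
`f(x,y) = C(x,y)` for `x, y ∈ [0,1)`; `f(1,y) = 0.9y₁9y₂9y₃⋯` for `y ∈ [0,1)`;
`f(x,1) = 0.x₁9x₂9x₃9⋯` for `x ∈ [0,1)`; and `f(1,1) = 1`. -/
noncomputable def cantorF (x y : ℝ) : ℝ :=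
  if x < 1 ∧ y < 1 then cantorC x y
  else if x = 1 ∧ y < 1 then
    (∑' k : ℕ, (9 : ℝ) / 10 ^ (2 * (k + 1) - 1)) +
      ∑' k : ℕ, (digit (k + 1) y : ℝ) / 10 ^ (2 * (k + 1))
  else if x < 1 ∧ y = 1 then
    (∑' k : ℕ, (digit (k + 1) x : ℝ) / 10 ^ (2 * (k + 1) - 1)) +
      ∑' k : ℕ, (9 : ℝ) / 10 ^ (2 * (k + 1))
  else 1

/-!
Write each point of `[0,1]` by its decimal digits, taking `0.999…` for `1`. Then `f(x,y)` is the
number whose digits alternate between those of `x` and of `y`. A digit sequence that is not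
eventually `9` is determined by its value: if two of them first differ at place `n`, the smaller
digit there cannot be compensated, because the remaining tail is strictly below `1`. Such a
sequence also has value `< 1 = 0.999…`, and the interleaved sequence is eventually `9` only for
`(x,y) = (1,1)`, where it is constantly `9`.
-/

open Filter

section Interleave

variable {α : Type*}

def interleave (a c : ℕ → α) (n : ℕ) : α :=
  if Even n then a (n / 2) else c (n / 2)

variable {a c a' c' : ℕ → α}

@[simp]
theorem interleave_two_mul (a c : ℕ → α) (k : ℕ) : interleave a c (2 * k) = a k := by
  simp [interleave]

@[simp]
theorem interleave_two_mul_add_one (a c : ℕ → α) (k : ℕ) : interleave a c (2 * k + 1) = c k := by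
  simp [interleave, Nat.mul_add_div]

theorem interleave_self_const (x : α) : interleave (fun _ ↦ x) (fun _ ↦ x) = fun _ ↦ x := by
  funext n
  rw [interleave, ite_self]

theorem interleave_inj : interleave a c = interleave a' c' ↔ a = a' ∧ c = c' := by
  refine ⟨fun h ↦ ⟨funext fun k ↦ ?_, funext fun k ↦ ?_⟩, fun ⟨rfl, rfl⟩ ↦ rfl⟩
  · simpa using congrFun h (2 * k)
  · simpa using congrFun h (2 * k + 1)

theorem frequently_interleave_left {p : α → Prop} (c : ℕ → α) (h : ∃ᶠ n in atTop, p (a n)) :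
    ∃ᶠ n in atTop, p (interleave a c n) := by
  rw [frequently_atTop] at h ⊢
  intro N
  obtain ⟨n, hn, hp⟩ := h N
  exact ⟨2 * n, by omega, by simpa⟩

theorem frequently_interleave_right {p : α → Prop} (a : ℕ → α) (h : ∃ᶠ n in atTop, p (c n)) :
    ∃ᶠ n in atTop, p (interleave a c n) := by
  rw [frequently_atTop] at h ⊢
  intro N
  obtain ⟨n, hn, hp⟩ := h N
  exact ⟨2 * n + 1, by omega, by simpa⟩

end Interleave

namespace Real

variable {b : ℕ}

theorem ofDigits_lt_one [NeZero b] {a : ℕ → Fin (b + 1)} (h : ∃ i, a i ≠ Fin.last b) :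
    ofDigits a < 1 := by
  obtain ⟨i, hi⟩ := h
  rw [← ofDigits_const_last_eq_one b]
  refine Summable.tsum_lt_tsum (i := i) (fun n ↦ ?_) ?_ summable_ofDigitsTerm summable_ofDigitsTerm
  · unfold ofDigitsTerm
    gcongr
    exact Fin.le_last _
  · unfold ofDigitsTerm
    gcongr
    exact Fin.lt_last_iff_ne_last.2 hi

theorem ofDigits_lt_ofDigits [NeZero b] {a a' : ℕ → Fin (b + 1)} {n : ℕ}
    (heq : ∀ i < n, a i = a' i) (hlt : a n < a' n) (hne : ∃ i > n, a i ≠ Fin.last b) :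
    ofDigits a < ofDigits a' := by
  have htail : ofDigits (fun i ↦ a (i + (n + 1))) < 1 := by
    obtain ⟨i, hi, hai⟩ := hne
    exact ofDigits_lt_one ⟨i - (n + 1), by rwa [Nat.sub_add_cancel hi]⟩
  have hdigit : (a n : ℝ) + 1 ≤ a' n := by exact_mod_cast hlt
  have hq : (0 : ℝ) < (((b + 1 : ℕ) : ℝ) ^ (n + 1))⁻¹ := by positivity
  rw [ofDigits_eq_sum_add_ofDigits a (n + 1), ofDigits_eq_sum_add_ofDigits a' (n + 1),
    Finset.sum_range_succ, Finset.sum_range_succ,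
    Finset.sum_congr rfl fun i hi ↦ by rw [ofDigitsTerm, heq i (Finset.mem_range.1 hi)]]
  unfold ofDigitsTerm
  nlinarith [ofDigits_nonneg fun i ↦ a' (i + (n + 1))]

theorem ofDigits_injOn [NeZero b] :
    InjOn (ofDigits (b := b + 1)) {a | ∃ᶠ i in atTop, a i ≠ Fin.last b} := by
  intro a ha a' ha' h
  by_contra hne
  have hex : ∃ n, a n ≠ a' n := Function.ne_iff.1 hne
  have heq : ∀ i < Nat.find hex, a i = a' i := fun i hi ↦ not_not.1 (Nat.find_min hex hi)
  rcases lt_or_gt_of_ne (Nat.find_spec hex) with hlt | hlt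
  · exact (ofDigits_lt_ofDigits heq hlt (frequently_atTop'.1 ha _)).ne h
  · exact (ofDigits_lt_ofDigits (fun i hi ↦ (heq i hi).symm) hlt
      (frequently_atTop'.1 ha' _)).ne' h

theorem ofDigits_injOn_insert_const_last [NeZero b] :
    InjOn (ofDigits (b := b + 1))
      (insert (fun _ ↦ Fin.last b) {a | ∃ᶠ i in atTop, a i ≠ Fin.last b}) := by
  refine (injOn_insert fun h ↦ ?_).2 ⟨ofDigits_injOn, ?_⟩
  · simp at h
  · rintro ⟨a, ha, h⟩
    rw [ofDigits_const_last_eq_one] at h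
    exact (ofDigits_lt_one ha.exists).ne h

theorem frequently_digits_ne_last [NeZero b] {x : ℝ} (hx : x ∈ Ico 0 1) :
    ∃ᶠ i in atTop, digits x (b + 1) i ≠ Fin.last b := by
  by_contra h
  obtain ⟨N, hN⟩ := eventually_atTop.1 (not_frequently.1 h)
  have hsplit := ofDigits_eq_sum_add_ofDigits (digits x (b + 1)) N
  rw [ofDigits_digits (by simp [NeZero.pos b]) hx,
    show (fun i ↦ digits x (b + 1) (i + N)) = fun _ ↦ Fin.last b from
      funext fun i ↦ not_not.1 (hN (i + N) (by omega)),
    ofDigits_const_last_eq_one, mul_one] at hsplit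
  have hpow : (0 : ℝ) < ((b + 1 : ℕ) : ℝ) ^ N := by positivity
  have hfloor : ((b + 1 : ℕ) : ℝ) ^ N * x = ⌊((b + 1 : ℕ) : ℝ) ^ N * x⌋₊ + 1 := by
    rw [← ofDigits_digits_sum_eq hx N]
    nth_rw 1 [hsplit]
    rw [mul_add, mul_inv_cancel₀ hpow.ne']
  linarith [Nat.lt_floor_add_one (((b + 1 : ℕ) : ℝ) ^ N * x)]

theorem ofDigits_interleave (a c : ℕ → Fin b) :
    ofDigits (interleave a c) = (∑' k, (a k : ℝ) / (b : ℝ) ^ (2 * (k + 1) - 1)) +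
      ∑' k, (c k : ℝ) / (b : ℝ) ^ (2 * (k + 1)) := by
  simp only [ofDigits]
  rw [← tsum_even_add_odd
    (summable_ofDigitsTerm.comp_injective (mul_right_injective₀ two_ne_zero))
    (summable_ofDigitsTerm.comp_injective
      ((add_left_injective 1).comp (mul_right_injective₀ two_ne_zero)))]
  congr 1 <;> refine tsum_congr fun k ↦ ?_
  · rw [ofDigitsTerm, interleave_two_mul,
      show 2 * (k + 1) - 1 = 2 * k + 1 by omega, div_eq_mul_inv]
  · rw [ofDigitsTerm, interleave_two_mul_add_one,
      show 2 * (k + 1) = 2 * k + 1 + 1 by ring, div_eq_mul_inv]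

noncomputable def digitsIcc (x : ℝ) (b : ℕ) : ℕ → Fin (b + 1) :=
  if x = 1 then fun _ ↦ Fin.last b else digits x (b + 1)

theorem digitsIcc_one (b : ℕ) : digitsIcc 1 b = fun _ ↦ Fin.last b := if_pos rfl

theorem digitsIcc_of_lt_one {x : ℝ} (hx : x < 1) (b : ℕ) : digitsIcc x b = digits x (b + 1) :=
  if_neg hx.ne

theorem ofDigits_digitsIcc [NeZero b] {x : ℝ} (hx : x ∈ Icc 0 1) :
    ofDigits (digitsIcc x b) = x := by
  rcases hx.2.lt_or_eq with hx1 | rfl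
  · rw [digitsIcc_of_lt_one hx1, ofDigits_digits (by simp [NeZero.pos b]) ⟨hx.1, hx1⟩]
  · rw [digitsIcc_one, ofDigits_const_last_eq_one]

theorem digitsIcc_injOn [NeZero b] : InjOn (digitsIcc · b) (Icc 0 1) :=
  LeftInvOn.injOn fun _ hx ↦ ofDigits_digitsIcc hx

theorem interleave_digitsIcc_mem [NeZero b] {x y : ℝ} (hx : x ∈ Icc 0 1) (hy : y ∈ Icc 0 1) :
    interleave (digitsIcc x b) (digitsIcc y b) ∈
      insert (fun _ ↦ Fin.last b) {a | ∃ᶠ i in atTop, a i ≠ Fin.last b} := by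
  rcases hx.2.lt_or_eq with hx1 | rfl
  · rw [digitsIcc_of_lt_one hx1]
    exact Or.inr <| frequently_interleave_left (p := (· ≠ Fin.last b)) _
      (frequently_digits_ne_last ⟨hx.1, hx1⟩)
  rcases hy.2.lt_or_eq with hy1 | rfl
  · rw [digitsIcc_of_lt_one hy1]
    exact Or.inr <| frequently_interleave_right (p := (· ≠ Fin.last b)) _
      (frequently_digits_ne_last ⟨hy.1, hy1⟩)
  · rw [digitsIcc_one, interleave_self_const]
    exact mem_insert _ _

end Real

open Real

theorem digit_succ_eq_digits {x : ℝ} (hx : 0 ≤ x) (k : ℕ) :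
    digit (k + 1) x = (digits x 10 k : ℕ) := by
  have h10 : (10 : ℝ) ^ k * x = 10 ^ (k + 1) * x / (10 : ℕ) := by push_cast; ring
  rw [digit, Nat.add_sub_cancel, h10, Int.floor_div_natCast, Nat.cast_ofNat, ← Int.emod_def,
    digits, Fin.val_ofNat, mul_comm x, ← Int.natCast_floor_eq_floor (by positivity)]
  push_cast
  rfl

theorem cantorF_eq_ofDigits {x y : ℝ} (hx : x ∈ Icc 0 1) (hy : y ∈ Icc 0 1) :
    cantorF x y = ofDigits (interleave (digitsIcc x 9) (digitsIcc y 9)) := by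
  rw [ofDigits_interleave]
  rcases hx.2.lt_or_eq with hx1 | rfl <;> rcases hy.2.lt_or_eq with hy1 | rfl
  · simp [cantorF, cantorC, hx1, hy1, digitsIcc_of_lt_one, digit_succ_eq_digits hx.1,
      digit_succ_eq_digits hy.1]
  · simp [cantorF, hx1, digitsIcc_of_lt_one, digitsIcc_one, digit_succ_eq_digits hx.1]
  · simp [cantorF, hy1, digitsIcc_of_lt_one, digitsIcc_one, digit_succ_eq_digits hy.1]
  · rw [← ofDigits_interleave, digitsIcc_one, interleave_self_const, ofDigits_const_last_eq_one]
    simp [cantorF]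

/-- The extension `f : [0,1]² → [0,1]` of Cantor's interleaving map is injective. -/
theorem cantorF_injOn :
    Set.InjOn (fun p : ℝ × ℝ => cantorF p.1 p.2) (Icc 0 1 ×ˢ Icc 0 1) := by
  rintro ⟨x, y⟩ ⟨hx, hy⟩ ⟨x', y'⟩ ⟨hx', hy'⟩ h
  dsimp only at hx hy hx' hy' h
  have hcode := ofDigits_injOn_insert_const_last (interleave_digitsIcc_mem hx hy)
    (interleave_digitsIcc_mem hx' hy')
    (by rwa [← cantorF_eq_ofDigits hx hy, ← cantorF_eq_ofDigits hx' hy'])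
  obtain ⟨hxx', hyy'⟩ := interleave_inj.1 hcode
  exact Prod.ext (digitsIcc_injOn hx hx' hxx') (digitsIcc_injOn hy hy' hyy')
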